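/- Let n ≥ 1, Ω a bounded open set with Lipschitz boundary, compactly contained in ℝⁿ, and E ⊂ ℝⁿ a measurable set with Per(E,Ω) < +∞. Then for every sequence s_i → (1/2)⁻ there exists a sequence of measurable sets E_i ⊂ ℝⁿ with χ_{E_i} → χ_E in L¹_loc(ℝⁿ) such that lim_{i→∞} (1/2 − s_i) Per_{s_i}^ext(E_i,Ω) = 0; hence the Γ-limit, in the L¹_loc topology, of (1/2 − s) Per_s^ext(·,Ω) as s → (1/2)⁻ is identically zero. -/

import Mathlib

open MeasureTheory Filter Topology Metric Set
open scoped ENNReal NNReal RealInnerProductSpace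

noncomputable section

/-- `ℝⁿ` with the Euclidean structure. -/
abbrev Rn (n : ℕ) := EuclideanSpace ℝ (Fin n)

/-- A double-well potential with wells at `±1`. -/
def DoubleWell (W : ℝ → ℝ) : Prop :=
  ContDiff ℝ 2 W ∧ (∀ t, 0 ≤ W t) ∧ W 1 = 0 ∧ W (-1) = 0 ∧
    (∀ t, t ≠ 1 → t ≠ -1 → 0 < W t) ∧
    deriv W 1 = 0 ∧ deriv W (-1) = 0 ∧
    0 < iteratedDeriv 2 W 1 ∧ 0 < iteratedDeriv 2 W (-1)

/-- Membership in `X = {u ∈ L^∞(ℝⁿ) : ‖u‖_∞ ≤ 1}`. -/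
def memX (n : ℕ) (u : Rn n → ℝ) : Prop :=
  Measurable u ∧ ∀ᵐ x ∂(volume : Measure (Rn n)), |u x| ≤ 1

/-- Convergence `u_ε → u₀` in `L¹_loc(ℝⁿ)` as `ε → 0⁺`. -/
def TendstoL1loc (n : ℕ) (u : ℝ → Rn n → ℝ) (u₀ : Rn n → ℝ) : Prop :=
  ∀ K : Set (Rn n), IsCompact K →
    Tendsto (fun ε => ∫⁻ x in K, ENNReal.ofReal |u ε x - u₀ x| ∂volume)
      (𝓝[>] (0:ℝ)) (𝓝 0)

/-- Interior interaction kernel `K^int(u,Ω)`. -/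
def Kint (n : ℕ) (s : ℝ) (u : Rn n → ℝ) (Ω : Set (Rn n)) : ℝ≥0∞ :=
  ∫⁻ x in Ω, ∫⁻ y in Ω, ENNReal.ofReal (|u x - u y| ^ 2 / ‖x - y‖ ^ ((n : ℝ) + 2 * s))

/-- Exterior interaction kernel `K^ext(u,Ω)`. -/
def Kext (n : ℕ) (s : ℝ) (u : Rn n → ℝ) (Ω : Set (Rn n)) : ℝ≥0∞ :=
  2 * ∫⁻ x in Ω, ∫⁻ y in Ωᶜ, ENNReal.ofReal (|u x - u y| ^ 2 / ‖x - y‖ ^ ((n : ℝ) + 2 * s))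

/-- Potential term `∫_Ω W(u)`. -/
def PotTerm (n : ℕ) (W : ℝ → ℝ) (u : Rn n → ℝ) (Ω : Set (Rn n)) : ℝ≥0∞ :=
  ∫⁻ x in Ω, ENNReal.ofReal (W (u x))

/-- `F^int_ε` for `s ∈ (0,1/2)`. -/
def Fint (n : ℕ) (s : ℝ) (W : ℝ → ℝ) (ε : ℝ) (u : Rn n → ℝ) (Ω : Set (Rn n)) : ℝ≥0∞ :=
  Kint n s u Ω + ENNReal.ofReal (ε ^ (-(2 * s)) / 2) * PotTerm n W u Ω

/-- `F^ext_ε` for `s ∈ (0,1/2)`. -/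
def Fext (n : ℕ) (s : ℝ) (W : ℝ → ℝ) (ε : ℝ) (u : Rn n → ℝ) (Ω : Set (Rn n)) : ℝ≥0∞ :=
  Kext n s u Ω + ENNReal.ofReal (ε ^ (-(2 * s)) / 2) * PotTerm n W u Ω

/-- Interaction functional `I_s(A,B)` between disjoint sets. -/
def Is (n : ℕ) (s : ℝ) (A B : Set (Rn n)) : ℝ≥0∞ :=
  ∫⁻ x in A, ∫⁻ y in B, ENNReal.ofReal (‖x - y‖ ^ (-((n : ℝ) + 2 * s)))

/-- Interior contribution of the fractional perimeter. -/
def PerSInt (n : ℕ) (s : ℝ) (E Ω : Set (Rn n)) : ℝ≥0∞ := Is n s (E ∩ Ω) (Ω \ E)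

/-- Exterior contribution of the fractional perimeter. -/
def PerSExt (n : ℕ) (s : ℝ) (E Ω : Set (Rn n)) : ℝ≥0∞ :=
  Is n s (E \ Ω) (Ω \ E) + Is n s (E ∩ Ω) (Ωᶜ \ E)

/-- Full fractional perimeter. -/
def PerS (n : ℕ) (s : ℝ) (E Ω : Set (Rn n)) : ℝ≥0∞ := PerSInt n s E Ω + PerSExt n s E Ω

/-- `u = χ_E − χ_{ℝⁿ∖E}` a.e. in `Ω`. -/
def phaseIn (n : ℕ) (u : Rn n → ℝ) (Ω E : Set (Rn n)) : Prop :=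
  ∀ᵐ x ∂(volume.restrict Ω), (x ∈ E → u x = 1) ∧ (x ∉ E → u x = -1)

/-- Γ-convergence, as `ε → 0⁺`, in the space `X` with the `L¹_loc` topology. -/
def GammaConvergesX (n : ℕ) (Fε : ℝ → (Rn n → ℝ) → ℝ≥0∞) (F : (Rn n → ℝ) → ℝ≥0∞) : Prop :=
  (∀ u : Rn n → ℝ, memX n u → ∀ uε : ℝ → Rn n → ℝ,
      (∀ ε ∈ Ioi (0:ℝ), memX n (uε ε)) → TendstoL1loc n uε u →
      F u ≤ liminf (fun ε => Fε ε (uε ε)) (𝓝[>] (0:ℝ))) ∧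
  (∀ u : Rn n → ℝ, memX n u → ∃ uε : ℝ → Rn n → ℝ,
      (∀ ε ∈ Ioi (0:ℝ), memX n (uε ε)) ∧ TendstoL1loc n uε u ∧
      limsup (fun ε => Fε ε (uε ε)) (𝓝[>] (0:ℝ)) ≤ F u)

/-- Divergence of a vector field on `ℝⁿ`. -/
def divg (n : ℕ) (φ : Rn n → Rn n) (x : Rn n) : ℝ :=
  ∑ i : Fin n, fderiv ℝ φ x (EuclideanSpace.single i (1:ℝ)) i

/-- Classical (distributional/De Giorgi) perimeter of `E` in the open set `Ω`:
the total variation of the distributional gradient of `χ_E` in `Ω`. -/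
def Per (n : ℕ) (E Ω : Set (Rn n)) : ℝ≥0∞ :=
  ⨆ (φ : Rn n → Rn n) (_ : ContDiff ℝ 1 φ) (_ : HasCompactSupport φ)
    (_ : tsupport φ ⊆ Ω) (_ : ∀ x, ‖φ x‖ ≤ 1),
    ENNReal.ofReal (∫ x in E, divg n φ x)

/-- `Ω` has Lipschitz boundary: near every boundary point, `Ω` is the subgraph
of a Lipschitz function in some direction. -/
def HasLipschitzBoundary (n : ℕ) (Ω : Set (Rn n)) : Prop :=
  ∀ x ∈ frontier Ω, ∃ r > (0:ℝ), ∃ v : Rn n, ‖v‖ = 1 ∧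
    ∃ (L : ℝ≥0) (f : Rn n → ℝ), LipschitzWith L f ∧
      Ω ∩ ball x r = {y ∈ ball x r | ⟪y, v⟫ < f (y - ⟪y, v⟫ • v)}

/-- The reduced boundary `∂*E` (identified, as usual up to an `H^{n-1}`-negligible set,
with the measure-theoretic boundary: points where the density of `E` is neither 0 nor 1). -/
def reducedBoundary (n : ℕ) (E : Set (Rn n)) : Set (Rn n) :=
  {x : Rn n |
    ¬ Tendsto (fun r : ℝ => volume (E ∩ ball x r) / volume (ball x r)) (𝓝[>] 0) (𝓝 0) ∧
    ¬ Tendsto (fun r : ℝ => volume (E ∩ ball x r) / volume (ball x r)) (𝓝[>] 0) (𝓝 1)}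

/-- `ω_m`: Lebesgue measure of the unit ball of `ℝ^m`. -/
def omegaBall (m : ℕ) : ℝ≥0∞ := volume (ball (0 : EuclideanSpace ℝ (Fin m)) 1)

/-- Dirichlet energy `∫_Ω |∇u|²`. -/
def Dirichlet (n : ℕ) (u : Rn n → ℝ) (Ω : Set (Rn n)) : ℝ≥0∞ :=
  ∫⁻ x in Ω, ENNReal.ofReal (‖gradient u x‖ ^ 2)

/-- Allen–Cahn energy `F₁(u,Ω) = ∫_Ω |∇u|² + ∫_Ω W(u)`. -/
def AC (n : ℕ) (W : ℝ → ℝ) (u : Rn n → ℝ) (Ω : Set (Rn n)) : ℝ≥0∞ :=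
  Dirichlet n u Ω + PotTerm n W u Ω

/-- Full nonlocal kernel `K(u,Ω) = K^int + K^ext`. -/
def Kfull (n : ℕ) (s : ℝ) (u : Rn n → ℝ) (Ω : Set (Rn n)) : ℝ≥0∞ :=
  Kint n s u Ω + Kext n s u Ω

/-- Fractional Allen–Cahn energy `F₁(u,Ω) = K(u,Ω) + ∫_Ω W(u)`. -/
def FracAC (n : ℕ) (s : ℝ) (W : ℝ → ℝ) (u : Rn n → ℝ) (Ω : Set (Rn n)) : ℝ≥0∞ :=
  Kfull n s u Ω + PotTerm n W u Ω

/-- `F^int_ε` for `s ∈ [1/2,1)` (with the logarithmic scaling at `s = 1/2`). -/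
def FintH (n : ℕ) (s : ℝ) (W : ℝ → ℝ) (ε : ℝ) (u : Rn n → ℝ) (Ω : Set (Rn n)) : ℝ≥0∞ :=
  if s = (1/2 : ℝ) then
    ENNReal.ofReal |Real.log ε|⁻¹ * Kint n s u Ω
      + ENNReal.ofReal (|ε * Real.log ε|⁻¹ / 2) * PotTerm n W u Ω
  else
    ENNReal.ofReal (ε ^ (2 * s - 1)) * Kint n s u Ω
      + ENNReal.ofReal (ε⁻¹ / 2) * PotTerm n W u Ω

/-- `F^ext_ε` for `s ∈ [1/2,1)`. -/
def FextH (n : ℕ) (s : ℝ) (W : ℝ → ℝ) (ε : ℝ) (u : Rn n → ℝ) (Ω : Set (Rn n)) : ℝ≥0∞ :=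
  if s = (1/2 : ℝ) then
    ENNReal.ofReal |Real.log ε|⁻¹ * Kext n s u Ω
      + ENNReal.ofReal (|ε * Real.log ε|⁻¹ / 2) * PotTerm n W u Ω
  else
    ENNReal.ofReal (ε ^ (2 * s - 1)) * Kext n s u Ω
      + ENNReal.ofReal (ε⁻¹ / 2) * PotTerm n W u Ω

/-- `F_ε = F^int_ε + F^ext_ε` for `s ∈ [1/2,1)`. -/
def FH (n : ℕ) (s : ℝ) (W : ℝ → ℝ) (ε : ℝ) (u : Rn n → ℝ) (Ω : Set (Rn n)) : ℝ≥0∞ :=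
  FintH n s W ε u Ω + FextH n s W ε u Ω

/-!
Thicken `E` by the `δ`-neighbourhood of `∂Ω`. Inside and outside `Ω`, the points of
`E_δ := E ∪ {dist(·, ∂Ω) < δ}` and of its complement that the exterior perimeter couples are
then at distance at least `δ`, since the segment between them crosses `∂Ω`. Hence
`Per_s^ext(E_δ, Ω) ≲ |Ω| δ^{-(n+1)}` uniformly for `s ∈ [1/4, 1/2]`, and the choice
`δ = (1/2 - s)^{1/(2(n+1))}` makes `(1/2 - s) Per_s^ext(E_δ, Ω) ≲ (1/2 - s)^{1/2} → 0`.
A Lipschitz boundary is Lebesgue-null, being locally contained in graphs, so `E_δ → E` in `L¹_loc`.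
-/

section Geometry

variable {V : Type*} [NormedAddCommGroup V] [InnerProductSpace ℝ V]

theorem frontier_inter_ball_subset_graph {Ω : Set V} {x v : V} {r : ℝ} {f : V → ℝ}
    (hf : Continuous f)
    (hΩ : Ω ∩ ball x r = {y ∈ ball x r | ⟪y, v⟫ < f (y - ⟪y, v⟫ • v)}) :
    frontier Ω ∩ ball x r ⊆ {y | ⟪y, v⟫ = f (y - ⟪y, v⟫ • v)} := by
  have hinner : Continuous fun y : V => ⟪y, v⟫ := continuous_id.inner continuous_const
  have hΩ' : Ω ∩ ball x r = {y | ⟪y, v⟫ < f (y - ⟪y, v⟫ • v)} ∩ ball x r := by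
    rw [hΩ, inter_comm]; rfl
  rw [← frontier_inter_open_inter isOpen_ball, hΩ', frontier_inter_open_inter isOpen_ball]
  exact inter_subset_left.trans <|
    frontier_lt_subset_eq hinner (hf.comp (continuous_id.sub (hinner.smul continuous_const)))

theorem addHaar_graph_eq_zero [FiniteDimensional ℝ V] [MeasurableSpace V] [BorelSpace V]
    (μ : Measure V) [μ.IsAddHaarMeasure] {v : V} (hv : ‖v‖ = 1) {f : V → ℝ}
    (hf : Measurable f) : μ {y | ⟪y, v⟫ = f (y - ⟪y, v⟫ • v)} = 0 := by
  have hinner : Continuous fun y : V => ⟪y, v⟫ := continuous_id.inner continuous_const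
  set φ : V → ℝ := fun y => ⟪y, v⟫ - f (y - ⟪y, v⟫ • v)
  have hφ : ∀ (t : ℝ) (y : V), φ (t • v + y) = φ y + t := by
    intro t y
    have hip : ⟪t • v + y, v⟫ = ⟪y, v⟫ + t := by
      rw [inner_add_left, real_inner_smul_left, real_inner_self_eq_norm_sq, hv]; ring
    simp only [φ, hip, add_smul]
    rw [show t • v + y - (⟪y, v⟫ • v + t • v) = y - ⟪y, v⟫ • v by abel]
    ring
  have hgraph : {y | ⟪y, v⟫ = f (y - ⟪y, v⟫ • v)} = φ ⁻¹' {0} := by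
    ext y; simp [φ, sub_eq_zero]
  have hbdd : Bornology.IsBounded (range fun k : ℕ => (2⁻¹ : ℝ) ^ k • v) :=
    isBounded_range_of_tendsto _
      ((tendsto_pow_atTop_nhds_zero_of_lt_one (by norm_num) (by norm_num)).smul_const v)
  have hmeas : Measurable φ :=
    hinner.measurable.sub (hf.comp (continuous_id.sub (hinner.smul continuous_const)).measurable)
  rw [hgraph]
  refine Measure.addHaar_eq_zero_of_disjoint_translates μ _ hbdd ?_
    (hmeas (measurableSet_singleton 0))
  intro k m hkm
  simp only [Function.onFun, image_add_left, singleton_add, disjoint_left, mem_preimage,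
    mem_singleton_iff]
  intro y hyk hym
  rw [← neg_smul, hφ] at hyk hym
  exact hkm (pow_right_injective₀ (by norm_num : (0 : ℝ) < 2⁻¹) (by norm_num) (by linarith))

end Geometry

theorem HasLipschitzBoundary.volume_frontier_eq_zero {n : ℕ} {Ω : Set (Rn n)}
    (hΩ : HasLipschitzBoundary n Ω) : volume (frontier Ω) = 0 := by
  refine measure_null_of_locally_null _ fun x hx => ?_
  obtain ⟨r, hr, v, hv, L, f, hf, hgraph⟩ := hΩ x hx
  exact ⟨frontier Ω ∩ ball x r, inter_mem_nhdsWithin _ (ball_mem_nhds x hr),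
    measure_mono_null (frontier_inter_ball_subset_graph hf.continuous hgraph)
      (addHaar_graph_eq_zero volume hv hf.continuous.measurable)⟩

section Separation

variable {X : Type*} [NormedAddCommGroup X] [NormedSpace ℝ X]

theorem exists_mem_frontier_mem_segment {s : Set X} {x y : X} (hx : x ∈ s) (hy : y ∉ s) :
    ∃ w ∈ frontier s, w ∈ segment ℝ x y := by
  have := Subtype.preconnectedSpace (convex_segment x y).isPreconnected
  obtain ⟨w, hw⟩ := (nonempty_frontier_iff (s := ((↑) : segment ℝ x y → X) ⁻¹' s)).2
    ⟨⟨⟨x, left_mem_segment ℝ x y⟩, hx⟩,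
      fun h => hy (eq_univ_iff_forall.1 h ⟨y, right_mem_segment ℝ x y⟩)⟩
  exact ⟨w, continuous_subtype_val.frontier_preimage_subset s hw, w.2⟩

theorem le_dist_of_notMem_thickening_frontier {s : Set X} {x y : X} {δ : ℝ} (hx : x ∈ s)
    (hy : y ∉ s) (hδ : x ∉ thickening δ (frontier s)) : δ ≤ dist x y := by
  obtain ⟨w, hw, hwxy⟩ := exists_mem_frontier_mem_segment hx hy
  calc δ ≤ dist x w := not_lt.1 fun h => hδ (mem_thickening_iff.2 ⟨w, hw, h⟩)
    _ ≤ dist x y := by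
      rw [← dist_add_dist_of_mem_segment hwxy]; exact le_add_of_nonneg_right dist_nonneg

end Separation

theorem tendsto_measure_symmDiff_union_thickening_inter {X ι : Type*} [PseudoMetricSpace X]
    [MeasurableSpace X] [OpensMeasurableSpace X] {μ : Measure X} [IsFiniteMeasureOnCompacts μ]
    {l : Filter ι} {δ : ι → ℝ} (hδ : Tendsto δ l (𝓝[>] 0)) {F K : Set X}
    (hF : μ (closure F) = 0) (hK : IsCompact K) (E : Set X) :
    Tendsto (fun i => μ (symmDiff (E ∪ thickening (δ i) F) E ∩ K)) l (𝓝 0) := by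
  have := isFiniteMeasure_restrict.2 (hK.measure_lt_top (μ := μ)).ne
  have hlim : Tendsto (fun r => μ.restrict K (thickening r F)) (𝓝[>] 0) (𝓝 0) := by
    have h := tendsto_measure_thickening (μ := μ.restrict K) (s := F)
      ⟨1, one_pos, measure_ne_top _ _⟩
    rwa [Measure.restrict_apply isClosed_closure.measurableSet,
      measure_mono_null inter_subset_left hF] at h
  refine tendsto_of_tendsto_of_tendsto_of_le_of_le tendsto_const_nhds (hlim.comp hδ)
    (fun _ => zero_le) fun i => ?_
  calc μ (symmDiff (E ∪ thickening (δ i) F) E ∩ K) ≤ μ (thickening (δ i) F ∩ K) := by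
        rw [symmDiff_of_ge subset_union_left, union_sdiff_left]
        exact measure_mono (inter_subset_inter_left _ sdiff_subset)
    _ = μ.restrict K (thickening (δ i) F) :=
        (Measure.restrict_apply isOpen_thickening.measurableSet).symm

theorem rpow_neg_le_div_pow_mul_one_add_rpow {n : ℕ} {s δ r : ℝ} (hs : 1 / 4 ≤ s)
    (hs' : s ≤ 1 / 2) (hδ : 0 < δ) (hδ1 : δ ≤ 1) (hr : δ ≤ r) :
    r ^ (-((n : ℝ) + 2 * s)) ≤ (2 / δ) ^ (n + 1) * (1 + r) ^ (-((n : ℝ) + 1 / 2)) := by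
  have hr' : (2 / δ)⁻¹ * (1 + r) ≤ r := by
    rw [inv_div]
    rcases le_total r 1 with h | h <;> nlinarith
  calc r ^ (-((n : ℝ) + 2 * s))
      ≤ ((2 / δ)⁻¹ * (1 + r)) ^ (-((n : ℝ) + 2 * s)) :=
        Real.rpow_le_rpow_of_nonpos (mul_pos (by positivity) (by linarith)) hr' (by linarith)
    _ = (2 / δ) ^ ((n : ℝ) + 2 * s) * (1 + r) ^ (-((n : ℝ) + 2 * s)) := by
        rw [Real.mul_rpow (by positivity) (by linarith), Real.inv_rpow (by positivity),
          Real.rpow_neg (by positivity), inv_inv]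
    _ ≤ (2 / δ) ^ (((n + 1 : ℕ) : ℝ)) * (1 + r) ^ (-((n : ℝ) + 1 / 2)) := by
        have h2δ : 1 ≤ 2 / δ := by rw [le_div_iff₀ hδ]; linarith
        have h1r : 1 ≤ 1 + r := by linarith [hδ.trans_le hr]
        exact mul_le_mul (Real.rpow_le_rpow_of_exponent_le h2δ (by push_cast; linarith))
          (Real.rpow_le_rpow_of_exponent_le h1r (by linarith))
          (Real.rpow_nonneg (by linarith) _) (by positivity)
    _ = (2 / δ) ^ (n + 1) * (1 + r) ^ (-((n : ℝ) + 1 / 2)) := by rw [Real.rpow_natCast]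

-- `n + 1/2` is the slowest decay rate `n + 2s` of the kernels for `s ≥ 1/4`, still integrable.
def tailIntegral (n : ℕ) : ℝ≥0∞ := ∫⁻ z : Rn n, ENNReal.ofReal ((1 + ‖z‖) ^ (-((n : ℝ) + 1 / 2)))

theorem tailIntegral_lt_top (n : ℕ) : tailIntegral n < ⊤ :=
  (integrable_one_add_norm (by rw [finrank_euclideanSpace_fin]; linarith)).lintegral_lt_top

theorem setLIntegral_ofReal_norm_sub_rpow_le {n : ℕ} {s δ : ℝ} (hs : 1 / 4 ≤ s) (hs' : s ≤ 1 / 2)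
    (hδ : 0 < δ) (hδ1 : δ ≤ 1) {x : Rn n} {B : Set (Rn n)} (hB : ∀ y ∈ B, δ ≤ dist x y) :
    ∫⁻ y in B, ENNReal.ofReal (‖x - y‖ ^ (-((n : ℝ) + 2 * s))) ≤
      ENNReal.ofReal ((2 / δ) ^ (n + 1)) * tailIntegral n := by
  calc ∫⁻ y in B, ENNReal.ofReal (‖x - y‖ ^ (-((n : ℝ) + 2 * s)))
      ≤ ∫⁻ y in B, ENNReal.ofReal ((2 / δ) ^ (n + 1)) *
          ENNReal.ofReal ((1 + ‖x - y‖) ^ (-((n : ℝ) + 1 / 2))) := by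
        refine setLIntegral_mono_ae ?_ (Eventually.of_forall fun y hy => ?_)
        · exact ((measurable_const.sub measurable_id).norm.const_add 1 |>.pow_const _
            |>.ennreal_ofReal |>.const_mul _).aemeasurable
        · rw [← ENNReal.ofReal_mul (by positivity)]
          exact ENNReal.ofReal_le_ofReal
            (rpow_neg_le_div_pow_mul_one_add_rpow hs hs' hδ hδ1 (dist_eq_norm x y ▸ hB y hy))
    _ ≤ ∫⁻ y, ENNReal.ofReal ((2 / δ) ^ (n + 1)) *
          ENNReal.ofReal ((1 + ‖x - y‖) ^ (-((n : ℝ) + 1 / 2))) := setLIntegral_le_lintegral _ _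
    _ = ENNReal.ofReal ((2 / δ) ^ (n + 1)) * tailIntegral n := by
        rw [lintegral_const_mul' _ _ ENNReal.ofReal_ne_top, tailIntegral,
          lintegral_sub_left_eq_self
            (fun z : Rn n => ENNReal.ofReal ((1 + ‖z‖) ^ (-((n : ℝ) + 1 / 2)))) x]

theorem Is_comm (n : ℕ) (s : ℝ) (A B : Set (Rn n)) : Is n s A B = Is n s B A := by
  have hk : Measurable fun p : Rn n × Rn n =>
      ENNReal.ofReal (‖p.1 - p.2‖ ^ (-((n : ℝ) + 2 * s))) :=
    ((measurable_fst.sub measurable_snd).norm.pow_const _).ennreal_ofReal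
  simp only [Is]
  rw [lintegral_lintegral_swap hk.aemeasurable]
  simp only [norm_sub_rev]

theorem Is_le_of_le_dist {n : ℕ} {s δ : ℝ} (hs : 1 / 4 ≤ s) (hs' : s ≤ 1 / 2) (hδ : 0 < δ)
    (hδ1 : δ ≤ 1) {A B : Set (Rn n)} (hA : MeasurableSet A)
    (hAB : ∀ x ∈ A, ∀ y ∈ B, δ ≤ dist x y) :
    Is n s A B ≤ ENNReal.ofReal ((2 / δ) ^ (n + 1)) * tailIntegral n * volume A :=
  (setLIntegral_mono' hA fun x hx =>
    setLIntegral_ofReal_norm_sub_rpow_le hs hs' hδ hδ1 (hAB x hx)).trans_eq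
      (setLIntegral_const _ _)

theorem PerSExt_union_thickening_frontier_le {n : ℕ} {s δ : ℝ} (hs : 1 / 4 ≤ s)
    (hs' : s ≤ 1 / 2) (hδ : 0 < δ) (hδ1 : δ ≤ 1) {E Ω : Set (Rn n)} (hE : MeasurableSet E)
    (hΩ : MeasurableSet Ω) :
    PerSExt n s (E ∪ thickening δ (frontier Ω)) Ω ≤
      ENNReal.ofReal ((2 / δ) ^ (n + 1)) * (2 * (tailIntegral n * volume Ω)) := by
  set F := E ∪ thickening δ (frontier Ω)
  have hF : MeasurableSet F := hE.union isOpen_thickening.measurableSet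
  have hout : Is n s (F \ Ω) (Ω \ F) ≤
      ENNReal.ofReal ((2 / δ) ^ (n + 1)) * tailIntegral n * volume Ω := by
    rw [Is_comm]
    refine (Is_le_of_le_dist hs hs' hδ hδ1 (hΩ.diff hF) ?_).trans (by gcongr; exact sdiff_subset)
    rintro x ⟨hxΩ, hxF⟩ y ⟨-, hyΩ⟩
    exact le_dist_of_notMem_thickening_frontier hxΩ hyΩ fun h => hxF (Or.inr h)
  have hin : Is n s (F ∩ Ω) (Ωᶜ \ F) ≤
      ENNReal.ofReal ((2 / δ) ^ (n + 1)) * tailIntegral n * volume Ω := by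
    refine (Is_le_of_le_dist hs hs' hδ hδ1 (hF.inter hΩ) ?_).trans
      (by gcongr; exact inter_subset_right)
    rintro x ⟨-, hxΩ⟩ y ⟨hyΩ, hyF⟩
    rw [dist_comm]
    refine le_dist_of_notMem_thickening_frontier (s := Ωᶜ) hyΩ (not_not_intro hxΩ) ?_
    rw [frontier_compl]
    exact fun h => hyF (Or.inr h)
  calc PerSExt n s F Ω ≤ _ := add_le_add hout hin
    _ = _ := by ring

def thickeningScale (n : ℕ) (s : ℝ) : ℝ := (1 / 2 - s) ^ ((2 * (n + 1 : ℝ))⁻¹)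

theorem div_thickeningScale_pow (n : ℕ) {s : ℝ} (hs : s ≤ 1 / 2) :
    (1 / 2 - s) / thickeningScale n s ^ (n + 1) = √(1 / 2 - s) := by
  rw [thickeningScale, ← Real.rpow_mul_natCast (by linarith), Nat.cast_add_one,
    show (2 * ((n : ℝ) + 1))⁻¹ * ((n : ℝ) + 1) = 1 / 2 by field_simp,
    ← Real.sqrt_eq_rpow, Real.div_sqrt]

theorem tendsto_thickeningScale (n : ℕ) {ι : Type*} {l : Filter ι} {s : ι → ℝ}
    (hs : Tendsto s l (𝓝[<] (1 / 2))) :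
    Tendsto (fun i => thickeningScale n (s i)) l (𝓝[>] 0) := by
  have ht : Tendsto (fun i => 1 / 2 - s i) l (𝓝 0) := by
    simpa using (tendsto_const_nhds (x := (1 / 2 : ℝ))).sub (tendsto_nhdsWithin_iff.1 hs).1
  refine tendsto_nhdsWithin_of_tendsto_nhds_of_eventually_within _
    (ht.rpow_const_nhds_zero (by positivity)) ?_
  filter_upwards [(tendsto_nhdsWithin_iff.1 hs).2] with i hi
  exact Real.rpow_pos_of_pos (sub_pos.2 hi) _

theorem ofReal_mul_PerSExt_union_thickening_le {n : ℕ} {s : ℝ} (hs : 1 / 4 ≤ s)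
    (hs' : s < 1 / 2) {E Ω : Set (Rn n)} (hE : MeasurableSet E) (hΩ : MeasurableSet Ω) :
    ENNReal.ofReal (1 / 2 - s) *
        PerSExt n s (E ∪ thickening (thickeningScale n s) (frontier Ω)) Ω ≤
      ENNReal.ofReal (2 ^ (n + 1) * √(1 / 2 - s)) * (2 * (tailIntegral n * volume Ω)) := by
  have hδ : 0 < thickeningScale n s := Real.rpow_pos_of_pos (by linarith) _
  have hδ1 : thickeningScale n s ≤ 1 := Real.rpow_le_one (by linarith) (by linarith) (by positivity)
  calc _ ≤ ENNReal.ofReal (1 / 2 - s) * (ENNReal.ofReal ((2 / thickeningScale n s) ^ (n + 1)) *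
          (2 * (tailIntegral n * volume Ω))) := by
        gcongr
        exact PerSExt_union_thickening_frontier_le hs hs'.le hδ hδ1 hE hΩ
    _ = _ := by
        rw [← mul_assoc, ← ENNReal.ofReal_mul (by linarith), div_pow, mul_div_left_comm,
          div_thickeningScale_pow n hs'.le]

theorem tendsto_ofReal_mul_PerSExt_union_thickening {n : ℕ} {E Ω : Set (Rn n)}
    (hE : MeasurableSet E) (hΩ : MeasurableSet Ω) (hΩ' : volume Ω ≠ ⊤) {ι : Type*}
    {l : Filter ι} {s : ι → ℝ} (hs : Tendsto s l (𝓝[<] (1 / 2))) :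
    Tendsto (fun i => ENNReal.ofReal (1 / 2 - s i) *
      PerSExt n (s i) (E ∪ thickening (thickeningScale n (s i)) (frontier Ω)) Ω) l (𝓝 0) := by
  have hC : 2 * (tailIntegral n * volume Ω) ≠ ⊤ :=
    ENNReal.mul_ne_top (by norm_num) (ENNReal.mul_ne_top (tailIntegral_lt_top n).ne hΩ')
  have ht : Tendsto (fun i => 1 / 2 - s i) l (𝓝 0) := by
    simpa using (tendsto_const_nhds (x := (1 / 2 : ℝ))).sub (tendsto_nhdsWithin_iff.1 hs).1
  have hlim := ENNReal.Tendsto.mul_const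
    (ENNReal.tendsto_ofReal (ht.sqrt.const_mul (2 ^ (n + 1)))) (Or.inr hC)
  rw [Real.sqrt_zero, mul_zero, ENNReal.ofReal_zero, zero_mul] at hlim
  refine tendsto_of_tendsto_of_tendsto_of_le_of_le' tendsto_const_nhds hlim
    (Eventually.of_forall fun _ => zero_le) ?_
  filter_upwards [(tendsto_nhdsWithin_iff.1 hs).1.eventually
    (eventually_ge_nhds (by norm_num : (1 / 4 : ℝ) < 1 / 2)), (tendsto_nhdsWithin_iff.1 hs).2]
    with i hi hi'
  exact ofReal_mul_PerSExt_union_thickening_le hi hi' hE hΩ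

theorem gamma_limit_perSExt_zero_general
    (n : ℕ)
    (Ω : Set (Rn n)) (hΩo : IsOpen Ω) (hΩb : Bornology.IsBounded Ω)
    (hΩlip : HasLipschitzBoundary n Ω)
    (E : Set (Rn n)) (hE : MeasurableSet E)
    (si : ℕ → ℝ) (hsi : ∀ i, si i ∈ Set.Ioo (0:ℝ) (1/2))
    (hs : Tendsto si atTop (𝓝 (1/2 : ℝ))) :
    ∃ Ei : ℕ → Set (Rn n), (∀ i, MeasurableSet (Ei i)) ∧
      (∀ K : Set (Rn n), IsCompact K →
        Tendsto (fun i => volume (symmDiff (Ei i) E ∩ K)) atTop (𝓝 0)) ∧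
      Tendsto (fun i => ENNReal.ofReal (1/2 - si i) * PerSExt n (si i) (Ei i) Ω)
        atTop (𝓝 0) := by
  have hs' : Tendsto si atTop (𝓝[<] (1 / 2)) :=
    tendsto_nhdsWithin_iff.2 ⟨hs, Eventually.of_forall fun i => (hsi i).2⟩
  have hΩnull : volume (closure (frontier Ω)) = 0 := by
    rw [isClosed_frontier.closure_eq]; exact hΩlip.volume_frontier_eq_zero
  exact ⟨fun i => E ∪ thickening (thickeningScale n (si i)) (frontier Ω),
    fun i => hE.union isOpen_thickening.measurableSet,
    fun K hK => tendsto_measure_symmDiff_union_thickening_inter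
      (tendsto_thickeningScale n hs') hΩnull hK E,
    tendsto_ofReal_mul_PerSExt_union_thickening hE hΩo.measurableSet hΩb.measure_lt_top.ne hs'⟩

/-- For every bounded open `Ω` with Lipschitz boundary and every
measurable `E` with `Per(E,Ω) < +∞`: for every sequence `s_i → (1/2)⁻` there is a
sequence of measurable sets `E_i` with `χ_{E_i} → χ_E` in `L¹_loc(ℝⁿ)` such that
`lim_i (1/2 − s_i) Per_{s_i}^ext(E_i,Ω) = 0`; hence the Γ-limit (in the `L¹_loc`
topology) of `(1/2 − s) Per_s^ext(·,Ω)` as `s → (1/2)⁻` is identically zero (the liminf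
inequality with limit `0` being trivial for the nonnegative functionals involved). -/
theorem gamma_limit_perSExt_zero
    (n : ℕ) (hn : 1 ≤ n)
    (Ω : Set (Rn n)) (hΩo : IsOpen Ω) (hΩb : Bornology.IsBounded Ω)
    (hΩlip : HasLipschitzBoundary n Ω)
    (E : Set (Rn n)) (hE : MeasurableSet E) (hper : Per n E Ω < ⊤)
    (si : ℕ → ℝ) (hsi : ∀ i, si i ∈ Set.Ioo (0:ℝ) (1/2))
    (hs : Tendsto si atTop (𝓝 (1/2 : ℝ))) :
    ∃ Ei : ℕ → Set (Rn n), (∀ i, MeasurableSet (Ei i)) ∧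
      (∀ K : Set (Rn n), IsCompact K →
        Tendsto (fun i => volume (symmDiff (Ei i) E ∩ K)) atTop (𝓝 0)) ∧
      Tendsto (fun i => ENNReal.ofReal (1/2 - si i) * PerSExt n (si i) (Ei i) Ω)
        atTop (𝓝 0) :=
  gamma_limit_perSExt_zero_general n Ω hΩo hΩb hΩlip E hE si hsi hs

end
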